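/- In H1(0), the pure strategy profile (G,G,G) is a Nash equilibrium but not a strong Nash equilibrium: players 1 and 2 can both strictly increase their payoffs by deviating to the profile (⊥,⊥,G). -/
import Mathlib


open Set

/-- Expected payoff in a 3-player game where each player has two actions
(`true` = G, `false` = ⊥), given the probabilities `p q r` of playing G. -/
noncomputable def exp3 (f : Bool → Bool → Bool → ℝ) (p q r : ℝ) : ℝ :=
  p*q*r * f true true true + p*q*(1-r) * f true true false +
  p*(1-q)*r * f true false true + p*(1-q)*(1-r) * f true false false +
  (1-p)*q*r * f false true true + (1-p)*q*(1-r) * f false true false +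
  (1-p)*(1-q)*r * f false false true + (1-p)*(1-q)*(1-r) * f false false false

/-- Payoff to player `i` in the game H1(u); `true` = G, `false` = ⊥. -/
noncomputable def H1 (u : ℝ) (i : Fin 3) (a b c : Bool) : ℝ :=
  match a, b, c with
  | true,  true,  true  => ![2*u, -u, -u] i
  | true,  true,  false => ![1, -1, 0] i
  | true,  false, true  => ![1, 0, -1] i
  | true,  false, false => ![-4, 2, 2] i
  | false, true,  true  => ![0, 0, 0] i
  | false, true,  false => ![2, -3, 1] i
  | false, false, true  => ![2, 1, -3] i
  | false, false, false => ![-2, 1, 1] i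

/-- `(p,q,r)` is a (mixed) Nash equilibrium of H1(u). -/
def H1NE (u p q r : ℝ) : Prop :=
  p ∈ Icc (0:ℝ) 1 ∧ q ∈ Icc (0:ℝ) 1 ∧ r ∈ Icc (0:ℝ) 1 ∧
  (∀ p' ∈ Icc (0:ℝ) 1, exp3 (H1 u 0) p' q r ≤ exp3 (H1 u 0) p q r) ∧
  (∀ q' ∈ Icc (0:ℝ) 1, exp3 (H1 u 1) p q' r ≤ exp3 (H1 u 1) p q r) ∧
  (∀ r' ∈ Icc (0:ℝ) 1, exp3 (H1 u 2) p q r' ≤ exp3 (H1 u 2) p q r)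

/-- `(p,q,r)` is a strong Nash equilibrium of H1(u). -/
def H1StrongNE (u p q r : ℝ) : Prop :=
  p ∈ Icc (0:ℝ) 1 ∧ q ∈ Icc (0:ℝ) 1 ∧ r ∈ Icc (0:ℝ) 1 ∧
  ∀ p' ∈ Icc (0:ℝ) 1, ∀ q' ∈ Icc (0:ℝ) 1, ∀ r' ∈ Icc (0:ℝ) 1,
    ¬ (p' = p ∧ q' = q ∧ r' = r) →
    (p' ≠ p ∧ exp3 (H1 u 0) p' q' r' ≤ exp3 (H1 u 0) p q r) ∨
    (q' ≠ q ∧ exp3 (H1 u 1) p' q' r' ≤ exp3 (H1 u 1) p q r) ∨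
    (r' ≠ r ∧ exp3 (H1 u 2) p' q' r' ≤ exp3 (H1 u 2) p q r)

/-- In H1(0), (G,G,G) is a Nash equilibrium but not a strong one: players 1 and 2
both strictly improve by deviating to (⊥,⊥,G). -/
theorem stmt3 :
    H1NE 0 1 1 1 ∧
    exp3 (H1 0 0) 1 1 1 < exp3 (H1 0 0) 0 0 1 ∧
    exp3 (H1 0 1) 1 1 1 < exp3 (H1 0 1) 0 0 1 ∧
    ¬ H1StrongNE 0 1 1 1 := by
  refine ⟨⟨⟨zero_le_one, le_refl 1⟩, ⟨zero_le_one, le_refl 1⟩, ⟨zero_le_one, le_refl 1⟩,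
    ?_, ?_, ?_⟩, ?_, ?_, ?_⟩
  · intro p' hp'; simp [exp3, H1]
  · intro q' hq'; simp [exp3, H1]
  · intro r' hr'; simp [exp3, H1]
  · simp [exp3, H1]
  · simp [exp3, H1]
  · intro h
    obtain ⟨-, -, -, h⟩ := h
    have := h 0 ⟨le_refl 0, zero_le_one⟩ 0 ⟨le_refl 0, zero_le_one⟩ 1 ⟨zero_le_one, le_refl 1⟩
      (by norm_num)
    rcases this with ⟨-, h⟩ | ⟨-, h⟩ | ⟨h, -⟩ <;> simp [exp3, H1] at h <;> linarith
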